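/- For every 3-CNF formula φ with n variables and m clauses (each clause having three literals over distinct variables and no clause containing a variable together with its negation), the PFA A_φ is one-cluster with respect to the letter a, and the vertex set of its a-cycle is P = {p_1, ..., p_m}. -/

import Mathlib

namespace PaperSync

variable {Q A : Type*}

/-- The extension of a partial transition function `δ : Q → A → Option Q` to words. -/
def wordMap (δ : Q → A → Option Q) : Q → List A → Option Q
  | q, [] => some q
  | q, x :: w => (δ q x).bind fun q' => wordMap δ q' w

/-- A word `w` carefully synchronizes the PFA `δ`:
`δ(q, w)` is defined for every state and all values agree. -/
def CarefullySync (δ : Q → A → Option Q) (w : List A) : Prop :=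
  ∃ qbar : Q, ∀ q : Q, wordMap δ q w = some qbar

open Classical in
/-- The image of a set of states under a word: defined iff `δ(q,w)` is defined
for all `q ∈ S`, in which case it is `{δ(q,w) : q ∈ S}`. -/
noncomputable def setImage (δ : Q → A → Option Q) (S : Set Q) (w : List A) :
    Option (Set Q) :=
  if ∀ q ∈ S, (wordMap δ q w).isSome then
    some {q' | ∃ q ∈ S, wordMap δ q w = some q'}
  else none

/-- A PFA is one-cluster with respect to a letter `a`: `a` is defined at every
state and the functional digraph `G_a` of `a` has exactly one weakly connected
component. -/
def OneCluster (δ : Q → A → Option Q) (a : A) : Prop :=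
  (∀ q : Q, (δ q a).isSome) ∧
  ∀ p q : Q, Relation.EqvGen (fun u v => δ u a = some v) p q

/-- The vertex set of the `a`-cycle: states returning to themselves under some
positive power of `a`. -/
def cycleSet (δ : Q → A → Option Q) (a : A) : Set Q :=
  {q | ∃ k : ℕ, 1 ≤ k ∧ wordMap δ q (List.replicate k a) = some q}

/-- The level of a state: the least `k` with `δ(q, a^k)` on the `a`-cycle. -/
noncomputable def levelOf (δ : Q → A → Option Q) (a : A) (q : Q) : ℕ :=
  sInf {k | ∃ p ∈ cycleSet δ a, wordMap δ q (List.replicate k a) = some p}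

/-- The level of `G_a`: the maximal level of a state. -/
noncomputable def levelG [Fintype Q] (δ : Q → A → Option Q) (a : A) : ℕ :=
  Finset.univ.sup (levelOf δ a)

/-- The binary alphabet `{a, b}` of `A_φ`. -/
inductive AB | a | b
deriving DecidableEq

instance : Fintype AB :=
  Fintype.ofList [AB.a, AB.b] (by intro x; cases x <;> simp)

/-- The states of `A_φ` for a 3-CNF formula with `n` variables and `m`
clauses: `p i` is `p_{i+1}`, `r i` is `r_{i+1}`, `ct i j` is `c_{i+1}^{x_{j+1}}`,
`cf i j` is `c̄_{i+1}^{x_{j+1}}`, `ctend i` is `c_{i+1}^{end}`, and `cfend i` is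
`c̄_{i+1}^{end}`. -/
inductive StQ (n m : ℕ)
  | p (i : Fin m)
  | r (i : Fin m)
  | ct (i : Fin m) (j : Fin n)
  | cf (i : Fin m) (j : Fin n)
  | ctend (i : Fin m)
  | cfend (i : Fin m)
deriving DecidableEq, Fintype

/-- The transition function of `A_φ`, where the formula `φ` is given by its
clauses `Cl i ⊆ Fin n × Bool` (a literal `(j, tt)` is `x_{j+1}`, a literal
`(j, ff)` is `¬x_{j+1}`). -/
def dphi (n m : ℕ) (hn : 0 < n) (Cl : Fin m → Finset (Fin n × Bool)) :
    StQ n m → AB → Option (StQ n m)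
  | .p i, .a => some (.p ⟨(i.val + 1) % m, Nat.mod_lt _ i.pos⟩)
  | .p i, .b => some (.cf i ⟨0, hn⟩)
  | .r i, .a => some (.p i)
  | .r _, .b => none
  | .ctend i, .a => some (.r i)
  | .ctend i, .b => some (.p ⟨0, i.pos⟩)
  | .cfend i, .a => some (.r i)
  | .cfend _, .b => none
  | .ct i j, _ =>
      some (if h : j.val + 1 < n then .ct i ⟨j.val + 1, h⟩ else .ctend i)
  | .cf i j, .a =>
      some (if h : j.val + 1 < n then
          (if (j, true) ∈ Cl i then .ct i ⟨j.val + 1, h⟩ else .cf i ⟨j.val + 1, h⟩)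
        else (if (j, true) ∈ Cl i then .ctend i else .cfend i))
  | .cf i j, .b =>
      some (if h : j.val + 1 < n then
          (if (j, false) ∈ Cl i then .ct i ⟨j.val + 1, h⟩ else .cf i ⟨j.val + 1, h⟩)
        else (if (j, false) ∈ Cl i then .ctend i else .cfend i))

/-- Every clause consists of exactly three literals over pairwise distinct
variables (in particular no clause contains both a variable and its
negation). -/
def GoodClauses (n m : ℕ) (Cl : Fin m → Finset (Fin n × Bool)) : Prop :=
  ∀ i : Fin m, (Cl i).card = 3 ∧ ((Cl i).image Prod.fst).card = 3

/-- The set `S_init = {c̄_1^{x_1}, …, c̄_m^{x_1}}`. -/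
def Sinit (n m : ℕ) (hn : 0 < n) : Set (StQ n m) :=
  Set.range fun i : Fin m => StQ.cf i ⟨0, hn⟩

/-- The set `S_end = {c_1^{end}, …, c_m^{end}}`. -/
def Send (n m : ℕ) : Set (StQ n m) :=
  Set.range StQ.ctend
section Aux

variable {n m : ℕ} {hn : 0 < n} {Cl : Fin m → Finset (Fin n × Bool)}

private def stRank : StQ n m → ℕ
  | .p _ => 0
  | .r _ => 1
  | .ctend _ => 2
  | .cfend _ => 2
  | .ct _ j => 3 + (n - 1 - j.val)
  | .cf _ j => 3 + (n - 1 - j.val)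

private lemma a_isSome (q : StQ n m) : (dphi n m hn Cl q AB.a).isSome := by
  cases q <;> simp [dphi]

private lemma rank_step {q q' : StQ n m}
    (h : dphi n m hn Cl q AB.a = some q') :
    stRank q' ≤ stRank q ∧ ((∀ i, q ≠ StQ.p i) → stRank q' < stRank q) := by
  cases q with
  | p i => simp [dphi] at h; subst h; simp [stRank]
  | r i => simp [dphi] at h; subst h; simp [stRank]
  | ctend i => simp [dphi] at h; subst h; simp [stRank]
  | cfend i => simp [dphi] at h; subst h; simp [stRank]
  | ct i j =>
      simp [dphi] at h; subst h
      have := j.isLt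
      split_ifs <;> simp [stRank] <;> omega
  | cf i j =>
      simp [dphi] at h; subst h
      have := j.isLt
      split_ifs <;> simp [stRank] <;> omega

private lemma wordMap_rep_succ (q : StQ n m) (k : ℕ) :
    wordMap (dphi n m hn Cl) q (List.replicate (k + 1) AB.a) =
      (dphi n m hn Cl q AB.a).bind
        (fun q' => wordMap (dphi n m hn Cl) q' (List.replicate k AB.a)) := rfl

private lemma rank_mono {k : ℕ} :
    ∀ {q q' : StQ n m},
      wordMap (dphi n m hn Cl) q (List.replicate k AB.a) = some q' →
      stRank q' ≤ stRank q := by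
  induction k with
  | zero => intro q q' h; simp [wordMap] at h; subst h; exact le_refl _
  | succ k ih =>
      intro q q' h
      rw [wordMap_rep_succ] at h
      obtain ⟨q1, h1, h2⟩ := Option.bind_eq_some_iff.mp h
      exact le_trans (ih h2) (rank_step h1).1

private lemma rank_strict {k : ℕ} (hk : 1 ≤ k) {q q' : StQ n m}
    (hq : ∀ i, q ≠ StQ.p i)
    (h : wordMap (dphi n m hn Cl) q (List.replicate k AB.a) = some q') :
    stRank q' < stRank q := by
  obtain ⟨k, rfl⟩ := Nat.exists_eq_add_of_le hk
  rw [Nat.add_comm 1 k] at h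
  rw [wordMap_rep_succ] at h
  obtain ⟨q1, h1, h2⟩ := Option.bind_eq_some_iff.mp h
  exact lt_of_le_of_lt (rank_mono h2) ((rank_step h1).2 hq)

private lemma wordMap_p (i : Fin m) (k : ℕ) :
    wordMap (dphi n m hn Cl) (StQ.p i) (List.replicate k AB.a) =
      some (StQ.p ⟨(i.val + k) % m, Nat.mod_lt _ i.pos⟩) := by
  induction k generalizing i with
  | zero => simp [wordMap]; exact Fin.ext (by simp [Nat.mod_eq_of_lt i.isLt])
  | succ k ih =>
      rw [wordMap_rep_succ]
      have hstep : dphi n m hn Cl (StQ.p i) AB.a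
          = some (StQ.p ⟨(i.val + 1) % m, Nat.mod_lt _ i.pos⟩) := rfl
      rw [hstep, Option.bind_some, ih]
      congr 2
      apply Fin.ext
      show ((i.val + 1) % m + k) % m = (i.val + (k + 1)) % m
      rw [Nat.mod_add_mod]
      congr 1
      omega

end Aux

section Aux2
variable {n m : ℕ} {hn : 0 < n} {Cl : Fin m → Finset (Fin n × Bool)}

private lemma reach_p (q : StQ n m) :
    ∃ (i : Fin m) (k : ℕ),
      wordMap (dphi n m hn Cl) q (List.replicate k AB.a) = some (StQ.p i) := by
  generalize hr : stRank q = N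
  induction N using Nat.strong_induction_on generalizing q with
  | _ N ih =>
    by_cases hq : ∃ i, q = StQ.p i
    · obtain ⟨i, rfl⟩ := hq; exact ⟨i, 0, rfl⟩
    · push_neg at hq
      obtain ⟨q1, h1⟩ := Option.isSome_iff_exists.mp (a_isSome (hn := hn) (Cl := Cl) q)
      have hlt : stRank q1 < N := hr ▸ (rank_step h1).2 hq
      obtain ⟨i, k, hk⟩ := ih _ hlt q1 rfl
      exact ⟨i, k + 1, by rw [wordMap_rep_succ, h1, Option.bind_some, hk]⟩

private lemma wordMap_eqvGen {k : ℕ} :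
    ∀ {q q' : StQ n m},
      wordMap (dphi n m hn Cl) q (List.replicate k AB.a) = some q' →
      Relation.EqvGen (fun u v => dphi n m hn Cl u AB.a = some v) q q' := by
  induction k with
  | zero => intro q q' h; simp [wordMap] at h; subst h; exact Relation.EqvGen.refl _
  | succ k ih =>
      intro q q' h
      rw [wordMap_rep_succ] at h
      obtain ⟨q1, h1, h2⟩ := Option.bind_eq_some_iff.mp h
      exact Relation.EqvGen.trans _ _ _ (Relation.EqvGen.rel _ _ h1) (ih h2)

private lemma p_reach_p (i j : Fin m) :
    ∃ k, wordMap (dphi n m hn Cl) (StQ.p i) (List.replicate k AB.a)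
      = some (StQ.p j) := by
  refine ⟨m + j.val - i.val, ?_⟩
  rw [wordMap_p]
  congr 2
  apply Fin.ext
  show (i.val + (m + j.val - i.val)) % m = j.val
  have h1 : i.val + (m + j.val - i.val) = m + j.val := by have := i.isLt; omega
  rw [h1, Nat.add_mod_left, Nat.mod_eq_of_lt j.isLt]

end Aux2

/-- for every 3-CNF formula `φ`, the PFA `A_φ` is one-cluster
with respect to the letter `a`, and the vertex set of its `a`-cycle is
`P = {p_1, …, p_m}`. -/
theorem Aphi_one_cluster (n m : ℕ) (hn : 0 < n)
    (Cl : Fin m → Finset (Fin n × Bool)) (hCl : GoodClauses n m Cl) :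
    OneCluster (dphi n m hn Cl) AB.a ∧
    cycleSet (dphi n m hn Cl) AB.a = Set.range (StQ.p : Fin m → StQ n m) := by
  constructor
  · refine ⟨fun q => a_isSome q, fun p q => ?_⟩
    obtain ⟨i, k, hk⟩ := reach_p p
    obtain ⟨i', k', hk'⟩ := reach_p q
    obtain ⟨k'', hk''⟩ := p_reach_p (hn := hn) (Cl := Cl) i i'
    exact Relation.EqvGen.trans _ _ _ (wordMap_eqvGen hk)
      (Relation.EqvGen.trans _ _ _ (wordMap_eqvGen hk'')
        (Relation.EqvGen.symm _ _ (wordMap_eqvGen hk')))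
  · ext q
    constructor
    · rintro ⟨k, hk1, hq⟩
      cases q with
      | p i => exact ⟨i, rfl⟩
      | r i => exact absurd (rank_strict hk1 (by simp) hq) (lt_irrefl _)
      | ct i j => exact absurd (rank_strict hk1 (by simp) hq) (lt_irrefl _)
      | cf i j => exact absurd (rank_strict hk1 (by simp) hq) (lt_irrefl _)
      | ctend i => exact absurd (rank_strict hk1 (by simp) hq) (lt_irrefl _)
      | cfend i => exact absurd (rank_strict hk1 (by simp) hq) (lt_irrefl _)
    · rintro ⟨i, rfl⟩
      refine ⟨m, i.pos, ?_⟩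
      rw [wordMap_p]
      congr 2
      exact Fin.ext (by simp [Nat.mod_eq_of_lt i.isLt])

end PaperSync
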